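/- arXiv:2411.17403 — 5 statements merged into one kernel-verified Lean document; each statement's English description precedes it below -/
import Mathlib

section
/- Let H be a real inner product space, G symmetric positive-definite and L symmetric positive-semidefinite linear operators on H, τ > 0, and let v ∈ H. If q ∈ H satisfies (I + τ·G∘L) q = −τ · G v, then ⟨v, q⟩ ≤ 0. -/
open RealInnerProductSpace

/-- If `(I + τ·G∘L) q = −τ·G v` with `G` symmetric positive-definite and `L` symmetric
positive-semidefinite, then `⟨v, q⟩ ≤ 0`. -/
theorem stmt1 {H : Type*} [NormedAddCommGroup H] [InnerProductSpace ℝ H]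
    (G L : H →ₗ[ℝ] H)
    (hGsym : ∀ x y : H, ⟪G x, y⟫ = ⟪x, G y⟫)
    (hGpos : ∀ x : H, x ≠ 0 → 0 < ⟪G x, x⟫)
    (hLsym : ∀ x y : H, ⟪L x, y⟫ = ⟪x, L y⟫)
    (hLpos : ∀ x : H, 0 ≤ ⟪L x, x⟫)
    (τ : ℝ) (hτ : 0 < τ) (v q : H)
    (hq : q + τ • G (L q) = -(τ • G v)) :
    ⟪v, q⟫ ≤ 0 := by
  set w := v + L q with hw
  have hGw : τ • G w = -q := by
    simp only [hw, map_add, smul_add]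
    have h2 : τ • G v = -q - τ • G (L q) := by
      have h3 : -(q + τ • G (L q)) = τ • G v := by rw [hq]; abel
      rw [← h3]; abel
    rw [h2]; abel
  have hGwnn : 0 ≤ ⟪G w, w⟫ := by
    rcases eq_or_ne w 0 with h | h
    · simp [h]
    · exact (hGpos w h).le
  have hv : v = w - L q := by simp [hw]
  have hq' : q = -(τ • G w) := by rw [hGw]; abel
  calc ⟪v, q⟫ = ⟪w, q⟫ - ⟪L q, q⟫ := by rw [hv, inner_sub_left]
    _ = -(τ * ⟪G w, w⟫) - ⟪L q, q⟫ := by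
        rw [hq', inner_neg_right, real_inner_smul_right, real_inner_comm]
    _ ≤ 0 := by
        have := hLpos q
        nlinarith
end

section
/- Let H be a real inner product space, L symmetric positive-semidefinite and G symmetric positive-definite linear operators on H, τ > 0 and λ ∈ [0,1]. Suppose φⁿ, φⁿ⁺¹, μⁿ⁺¹, w ∈ H and rⁿ, rⁿ⁺¹, s ∈ ℝ with s > 0, Eⁿ, Eⁿ⁺¹ ∈ ℝ satisfy: (φⁿ⁺¹ − φⁿ)/τ = −G μⁿ⁺¹, μⁿ⁺¹ = L φⁿ⁺¹ + (rⁿ⁺¹/s)·w, and λ·2rⁿ⁺¹(rⁿ⁺¹ − rⁿ)/τ + (1−λ)(Eⁿ⁺¹ − Eⁿ)/τ = (rⁿ⁺¹/s)·⟨w, (φⁿ⁺¹ − φⁿ)/τ⟩. Then with Ē(φ,r,E) := ½⟨φ, Lφ⟩ + λ r² + (1−λ) E, one has (Ē(φⁿ⁺¹, rⁿ⁺¹, Eⁿ⁺¹) − Ē(φⁿ, rⁿ, Eⁿ))/τ ≤ −⟨μⁿ⁺¹, G μⁿ⁺¹⟩ ≤ 0. -/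
open RealInnerProductSpace

/-- Unconditional (modified) energy stability of the first-order weighted SAV-BE scheme. -/
theorem stmt6 {H : Type*} [NormedAddCommGroup H] [InnerProductSpace ℝ H]
    (G L : H →ₗ[ℝ] H)
    (hGsym : ∀ x y : H, ⟪G x, y⟫ = ⟪x, G y⟫)
    (hGpos : ∀ x : H, x ≠ 0 → 0 < ⟪G x, x⟫)
    (hLsym : ∀ x y : H, ⟪L x, y⟫ = ⟪x, L y⟫)
    (hLpos : ∀ x : H, 0 ≤ ⟪L x, x⟫)
    (τ lam : ℝ) (hτ : 0 < τ) (hlam : lam ∈ Set.Icc (0 : ℝ) 1)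
    (φn φn1 μn1 w : H) (rn rn1 s En En1 : ℝ) (hs : 0 < s)
    (h1 : (1 / τ) • (φn1 - φn) = -(G μn1))
    (h2 : μn1 = L φn1 + (rn1 / s) • w)
    (h3 : lam * (2 * rn1 * (rn1 - rn)) / τ + (1 - lam) * (En1 - En) / τ
        = (rn1 / s) * ⟪w, (1 / τ) • (φn1 - φn)⟫) :
    ((1 / 2 * ⟪φn1, L φn1⟫ + lam * rn1 ^ 2 + (1 - lam) * En1)
      - (1 / 2 * ⟪φn, L φn⟫ + lam * rn ^ 2 + (1 - lam) * En)) / τ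
        ≤ -⟪μn1, G μn1⟫ ∧ -⟪μn1, G μn1⟫ ≤ 0 := by

  obtain ⟨hl0, hl1⟩ := hlam
  set a := ⟪L φn1, φn1⟫ with ha
  set b := ⟪L φn1, φn⟫ with hb
  set c := ⟪L φn, φn⟫ with hc
  have hG0 : (0:ℝ) ≤ ⟪μn1, G μn1⟫ := by
    by_cases h : μn1 = 0
    · simp [h]
    · have := hGpos μn1 h
      rw [hGsym] at this
      linarith
  have hba : ⟪L φn, φn1⟫ = b := by
    rw [hLsym, real_inner_comm]
  have hpos : 0 ≤ a - 2*b + c := by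
    have := hLpos (φn1 - φn)
    simp only [map_sub, inner_sub_left, inner_sub_right, hba] at this
    linarith
  have key : ⟪μn1, (1/τ) • (φn1 - φn)⟫ = -⟪μn1, G μn1⟫ := by
    rw [h1, inner_neg_right]
  have expand : ⟪μn1, (1/τ) • (φn1 - φn)⟫
      = (1/τ) * (a - b) + (rn1/s) * ⟪w, (1/τ) • (φn1 - φn)⟫ := by
    rw [h2]
    rw [inner_add_left, real_inner_smul_left, real_inner_smul_right,
      inner_sub_right, ha, hb]
  have heq : -⟪μn1, G μn1⟫
      = (1/τ) * (a - b) + lam * (2 * rn1 * (rn1 - rn)) / τ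
        + (1 - lam) * (En1 - En) / τ := by
    rw [← key, expand, ← h3]; ring
  constructor
  · have ha' : ⟪φn1, L φn1⟫ = a := real_inner_comm _ _
    have hc' : ⟪φn, L φn⟫ = c := real_inner_comm _ _
    rw [ha', hc', heq]
    have hsq : 0 ≤ lam * (rn1 - rn)^2 := by positivity
    rw [div_le_iff₀ hτ, ← sub_nonneg]
    have hτ0 : τ ≠ 0 := ne_of_gt hτ
    have hid : ((1/τ) * (a - b) + lam * (2 * rn1 * (rn1 - rn)) / τ
        + (1 - lam) * (En1 - En) / τ) * τ
        - ((1 / 2 * a + lam * rn1 ^ 2 + (1 - lam) * En1)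
          - (1 / 2 * c + lam * rn ^ 2 + (1 - lam) * En))
        = (1/2) * (a - 2*b + c) + lam * (rn1 - rn)^2 := by
      field_simp
      ring
    rw [hid]
    linarith
  · linarith
end

section
/- Under the hypotheses of the weighted SAV-BE scheme (as in the previous energy-stability statement), if additionally 2rⁿ⁺¹(rⁿ⁺¹ − rⁿ) ≥ Eⁿ⁺¹ − Eⁿ, then the original discrete energy E(φ,E) := ½⟨φ, Lφ⟩ + E satisfies (E(φⁿ⁺¹, Eⁿ⁺¹) − E(φⁿ, Eⁿ))/τ ≤ −⟨μⁿ⁺¹, G μⁿ⁺¹⟩ ≤ 0. -/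
open RealInnerProductSpace

/-- Original energy dissipation of the weighted SAV-BE scheme under the compatibility
condition `2rⁿ⁺¹(rⁿ⁺¹−rⁿ) ≥ Eⁿ⁺¹−Eⁿ`. -/
theorem stmt7 {H : Type*} [NormedAddCommGroup H] [InnerProductSpace ℝ H]
    (G L : H →ₗ[ℝ] H)
    (hGsym : ∀ x y : H, ⟪G x, y⟫ = ⟪x, G y⟫)
    (hGpos : ∀ x : H, x ≠ 0 → 0 < ⟪G x, x⟫)
    (hLsym : ∀ x y : H, ⟪L x, y⟫ = ⟪x, L y⟫)
    (hLpos : ∀ x : H, 0 ≤ ⟪L x, x⟫)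
    (τ lam : ℝ) (hτ : 0 < τ) (hlam : lam ∈ Set.Icc (0 : ℝ) 1)
    (φn φn1 μn1 w : H) (rn rn1 s En En1 : ℝ) (hs : 0 < s)
    (h1 : (1 / τ) • (φn1 - φn) = -(G μn1))
    (h2 : μn1 = L φn1 + (rn1 / s) • w)
    (h3 : lam * (2 * rn1 * (rn1 - rn)) + (1 - lam) * (En1 - En)
        = (rn1 / s) * ⟪w, φn1 - φn⟫)
    (hcompat : 2 * rn1 * (rn1 - rn) ≥ En1 - En) :
    ((1 / 2 * ⟪φn1, L φn1⟫ + En1) - (1 / 2 * ⟪φn, L φn⟫ + En)) / τ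
        ≤ -⟪μn1, G μn1⟫ ∧ -⟪μn1, G μn1⟫ ≤ 0 := by
  obtain ⟨hl0, hl1⟩ := hlam
  have hδ : φn1 - φn = -(τ • G μn1) := by
    have h := congrArg (fun x => τ • x) h1
    simpa [smul_smul, mul_inv_cancel₀ hτ.ne'] using h
  have key : ⟪μn1, φn1 - φn⟫ = -(τ * ⟪μn1, G μn1⟫) := by
    rw [hδ]; simp [inner_neg_right, real_inner_smul_right]
  have hGnn : 0 ≤ ⟪μn1, G μn1⟫ := by
    rcases eq_or_ne μn1 0 with h | h
    · simp [h]
    · have := (hGpos μn1 h).le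
      rwa [real_inner_comm] at this
  have hexp : ⟪μn1, φn1 - φn⟫ = ⟪L φn1, φn1 - φn⟫ + (rn1 / s) * ⟪w, φn1 - φn⟫ := by
    rw [h2]; simp [inner_add_left, real_inner_smul_left]
  have hLbound : 1 / 2 * ⟪φn1, L φn1⟫ - 1 / 2 * ⟪φn, L φn⟫ ≤ ⟪L φn1, φn1 - φn⟫ := by
    have hq := hLpos (φn1 - φn)
    have e1 : ⟪L (φn1 - φn), φn1 - φn⟫
        = ⟪L φn1, φn1⟫ - ⟪L φn1, φn⟫ - ⟪L φn, φn1⟫ + ⟪L φn, φn⟫ := by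
      simp [map_sub, inner_sub_left, inner_sub_right]; ring
    have e2 : ⟪L φn, φn1⟫ = ⟪L φn1, φn⟫ := by
      rw [hLsym]; exact real_inner_comm _ _
    have e3 : ⟪φn1, L φn1⟫ = ⟪L φn1, φn1⟫ := real_inner_comm _ _
    have e4 : ⟪φn, L φn⟫ = ⟪L φn, φn⟫ := real_inner_comm _ _
    have e5 : ⟪L φn1, φn1 - φn⟫ = ⟪L φn1, φn1⟫ - ⟪L φn1, φn⟫ := by
      simp [inner_sub_right]
    nlinarith
  have hEbound : En1 - En ≤ (rn1 / s) * ⟪w, φn1 - φn⟫ := by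
    rw [← h3]; nlinarith
  constructor
  · rw [div_le_iff₀ hτ]
    nlinarith
  · linarith
end

section
/- Let H be a real inner product space, L symmetric positive-semidefinite and G symmetric positive-definite linear operators, τ > 0, λ ∈ [0,1], s > 0, w ∈ H. Suppose φⁿ, φⁿ⁺¹, μ ∈ H, rⁿ, rⁿ⁺¹, Eⁿ, Eⁿ⁺¹ ∈ ℝ satisfy the Crank–Nicolson relations: (φⁿ⁺¹ − φⁿ)/τ = −Gμ, μ = L(φⁿ⁺¹+φⁿ)/2 + ((rⁿ⁺¹+rⁿ)/(2s))·w, and λ(rⁿ⁺¹+rⁿ)(rⁿ⁺¹−rⁿ)/τ + (1−λ)(Eⁿ⁺¹−Eⁿ)/τ = ((rⁿ⁺¹+rⁿ)/(2s))·⟨w,(φⁿ⁺¹−φⁿ)/τ⟩. Then with Ē(φ,r,E) := ½⟨φ,Lφ⟩ + λr² + (1−λ)E, one has (Ē(φⁿ⁺¹,rⁿ⁺¹,Eⁿ⁺¹) − Ē(φⁿ,rⁿ,Eⁿ))/τ = −⟨μ, Gμ⟩ ≤ 0. -/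
open RealInnerProductSpace

/-- Energy stability (with equality) of the second-order weighted SAV-CN scheme. -/
theorem stmt8 {H : Type*} [NormedAddCommGroup H] [InnerProductSpace ℝ H]
    (G L : H →ₗ[ℝ] H)
    (hGsym : ∀ x y : H, ⟪G x, y⟫ = ⟪x, G y⟫)
    (hGpos : ∀ x : H, x ≠ 0 → 0 < ⟪G x, x⟫)
    (hLsym : ∀ x y : H, ⟪L x, y⟫ = ⟪x, L y⟫)
    (hLpos : ∀ x : H, 0 ≤ ⟪L x, x⟫)
    (τ lam : ℝ) (hτ : 0 < τ) (hlam : lam ∈ Set.Icc (0 : ℝ) 1)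
    (φn φn1 μ w : H) (rn rn1 s En En1 : ℝ) (hs : 0 < s)
    (h1 : (1 / τ) • (φn1 - φn) = -(G μ))
    (h2 : μ = L ((1 / 2 : ℝ) • (φn1 + φn)) + ((rn1 + rn) / (2 * s)) • w)
    (h3 : lam * ((rn1 + rn) * (rn1 - rn)) / τ + (1 - lam) * (En1 - En) / τ
        = ((rn1 + rn) / (2 * s)) * ⟪w, (1 / τ) • (φn1 - φn)⟫) :
    ((1 / 2 * ⟪φn1, L φn1⟫ + lam * rn1 ^ 2 + (1 - lam) * En1)
      - (1 / 2 * ⟪φn, L φn⟫ + lam * rn ^ 2 + (1 - lam) * En)) / τ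
        = -⟪μ, G μ⟫ ∧ -⟪μ, G μ⟫ ≤ 0 := by
  set v : H := (1 / τ) • (φn1 - φn) with hv
  have hμv : ⟪μ, v⟫ = -⟪μ, G μ⟫ := by
    rw [h1, inner_neg_right]
  have hLpart : ⟪L ((1 / 2 : ℝ) • (φn1 + φn)), v⟫
      = (1 / (2 * τ)) * (⟪φn1, L φn1⟫ - ⟪φn, L φn⟫) := by
    have hsymm : ⟪L φn, φn1⟫ = ⟪L φn1, φn⟫ := by
      rw [hLsym, real_inner_comm]
    simp only [hv]
    simp only [map_smul, inner_smul_left, inner_smul_right, map_add, inner_add_left,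
      inner_sub_right, RCLike.conj_to_real]
    rw [hsymm, real_inner_comm φn1 (L φn1), real_inner_comm φn (L φn)]
    ring
  have hexp : ⟪μ, v⟫ = ⟪L ((1 / 2 : ℝ) • (φn1 + φn)), v⟫
      + ((rn1 + rn) / (2 * s)) * ⟪w, v⟫ := by
    rw [h2, inner_add_left, inner_smul_left, RCLike.conj_to_real]
  have key : ((1 / 2 * ⟪φn1, L φn1⟫ + lam * rn1 ^ 2 + (1 - lam) * En1)
      - (1 / 2 * ⟪φn, L φn⟫ + lam * rn ^ 2 + (1 - lam) * En)) / τ = -⟪μ, G μ⟫ := by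
    rw [← hμv, hexp, hLpart, ← h3]
    field_simp
    ring
  refine ⟨key, ?_⟩
  simp only [neg_nonpos]
  rcases eq_or_ne μ 0 with h | h
  · simp [h]
  · have := hGpos μ h
    rw [hGsym] at this
    linarith
end

section
/- Under the Crank–Nicolson weighted SAV relations (previous statement), if additionally (rⁿ⁺¹)² − (rⁿ)² ≥ Eⁿ⁺¹ − Eⁿ, then (½⟨φⁿ⁺¹,Lφⁿ⁺¹⟩ + Eⁿ⁺¹ − ½⟨φⁿ,Lφⁿ⟩ − Eⁿ)/τ ≤ −⟨μ, Gμ⟩ ≤ 0. -/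
open RealInnerProductSpace

/-- Original energy dissipation of the weighted SAV-CN scheme under the compatibility
condition `(rⁿ⁺¹)² − (rⁿ)² ≥ Eⁿ⁺¹ − Eⁿ`. -/
theorem stmt9 {H : Type*} [NormedAddCommGroup H] [InnerProductSpace ℝ H]
    (G L : H →ₗ[ℝ] H)
    (hGsym : ∀ x y : H, ⟪G x, y⟫ = ⟪x, G y⟫)
    (hGpos : ∀ x : H, x ≠ 0 → 0 < ⟪G x, x⟫)
    (hLsym : ∀ x y : H, ⟪L x, y⟫ = ⟪x, L y⟫)
    (hLpos : ∀ x : H, 0 ≤ ⟪L x, x⟫)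
    (τ lam : ℝ) (hτ : 0 < τ) (hlam : lam ∈ Set.Icc (0 : ℝ) 1)
    (φn φn1 μ w : H) (rn rn1 s En En1 : ℝ) (hs : 0 < s)
    (h1 : (1 / τ) • (φn1 - φn) = -(G μ))
    (h2 : μ = L ((1 / 2 : ℝ) • (φn1 + φn)) + ((rn1 + rn) / (2 * s)) • w)
    (h3 : lam * ((rn1 + rn) * (rn1 - rn)) + (1 - lam) * (En1 - En)
        = ((rn1 + rn) / (2 * s)) * ⟪w, φn1 - φn⟫)
    (hcompat : rn1 ^ 2 - rn ^ 2 ≥ En1 - En) :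
    ((1 / 2 * ⟪φn1, L φn1⟫ + En1) - (1 / 2 * ⟪φn, L φn⟫ + En)) / τ
        ≤ -⟪μ, G μ⟫ ∧ -⟪μ, G μ⟫ ≤ 0 := by
  obtain ⟨hl0, hl1⟩ := hlam
  have hGnn : 0 ≤ ⟪μ, G μ⟫ := by
    rcases eq_or_ne μ 0 with h | h
    · simp [h]
    · have := hGpos μ h
      rw [real_inner_comm] at this
      linarith
  -- step equation: φn1 - φn = -τ • G μ
  have hstep : φn1 - φn = (-τ) • G μ := by
    have := congrArg (fun x : H => τ • x) h1
    simpa [smul_smul, hτ.ne', neg_smul] using this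
  -- inner product with μ
  have hinner : ⟪μ, φn1 - φn⟫ = -(τ * ⟪μ, G μ⟫) := by
    rw [hstep, real_inner_smul_right]; ring
  -- expand via h2
  have hL : ⟪L ((1 / 2 : ℝ) • (φn1 + φn)), φn1 - φn⟫
      = 1 / 2 * ⟪φn1, L φn1⟫ - 1 / 2 * ⟪φn, L φn⟫ := by
    have hcross : ⟪L φn, φn1⟫ = ⟪L φn1, φn⟫ := by
      rw [hLsym, real_inner_comm]
    simp only [map_smul, map_add, real_inner_smul_left, inner_add_left,
      inner_sub_right]
    rw [hcross]
    rw [real_inner_comm φn1 (L φn1), real_inner_comm φn (L φn)]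
    ring
  have hexp : ⟪μ, φn1 - φn⟫
      = (1 / 2 * ⟪φn1, L φn1⟫ - 1 / 2 * ⟪φn, L φn⟫)
        + (lam * ((rn1 + rn) * (rn1 - rn)) + (1 - lam) * (En1 - En)) := by
    rw [h2, inner_add_left, hL, real_inner_smul_left, ← h3]
  -- convexity bound
  have hconv : En1 - En ≤ lam * ((rn1 + rn) * (rn1 - rn)) + (1 - lam) * (En1 - En) := by
    have h : (rn1 + rn) * (rn1 - rn) = rn1 ^ 2 - rn ^ 2 := by ring
    rw [h]
    nlinarith
  have hkey : (1 / 2 * ⟪φn1, L φn1⟫ + En1) - (1 / 2 * ⟪φn, L φn⟫ + En)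
      ≤ -(τ * ⟪μ, G μ⟫) := by
    rw [← hinner, hexp]; linarith
  constructor
  · rw [div_le_iff₀ hτ]
    nlinarith
  · linarith
end
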